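/- In the setting of the context, suppose additionally that for each k (large enough) the stationarity equation 0 = ∇f(Y^k) + β(X^{k+1} − Y^k) + β(X^{k+1} − X^k) + λ U^{k+1} diag(w^k ∘ ξ^{k+1}) (V^{k+1})ᵀ holds with an SVD X^{k+1} = U^{k+1} diag(σ(X^{k+1})) (V^{k+1})ᵀ and ξ_i^{k+1} ∈ [−1,1]; that there exist r ∈ ℕ and c > 0 with σ_i(X^{k+1}) ≥ c and σ_i(X^k) + ε_i^k ≥ c for all i ≤ r and σ_i(X^{k+1}) = 0 for all i > r (for all large k); that ε_i^k → 0 as k → ∞ for all i ≤ r; and that ‖X^{k+1} − X^k‖_F → 0. Define E^{k+1} = ∇f(X^{k+1}) + λ U^{k+1} diag(w̄^{k+1} ∘ ξ^{k+1}) (V^{k+1})ᵀ with w̄_i^{k+1} = p σ_i(X^{k+1})^{p−1} for i ≤ r and w̄_i^{k+1} = w_i^k for i > r. Then ‖E^{k+1}‖_F → 0 as k → ∞. -/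

import Mathlib

open Filter Topology Matrix

/-- The singular values of a real `m × n` matrix (`m ≤ n`), in nonincreasing order:
`sval X i` is the `(i+1)`-th largest singular value of `X`. -/
noncomputable def sval {m n : ℕ} (X : Matrix (Fin m) (Fin n) ℝ) : Fin m → ℝ :=
  fun i =>
    let ev : Fin m → ℝ := (Matrix.isHermitian_mul_conjTranspose_self X).eigenvalues
    Real.sqrt (ev (Tuple.sort ev i.rev))

/-- The `m × n` matrix with the vector `d` on its main diagonal and zeros elsewhere. -/
def rdiag {m n : ℕ} (d : Fin m → ℝ) : Matrix (Fin m) (Fin n) ℝ :=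
  Matrix.of fun i j => if (j : ℕ) = (i : ℕ) then d i else 0

/-- The Frobenius norm of a matrix. -/
noncomputable def frobNorm {m n : ℕ} (X : Matrix (Fin m) (Fin n) ℝ) : ℝ :=
  Real.sqrt (∑ i, ∑ j, (X i j) ^ 2)

/-- The Frobenius (trace) inner product of two matrices. -/
def finner {m n : ℕ} (A B : Matrix (Fin m) (Fin n) ℝ) : ℝ :=
  ∑ i, ∑ j, A i j * B i j

/-- `G` is the (Fréchet) gradient of `f : ℝ^{m×n} → ℝ` at `X`, with respect to the
Frobenius inner product. -/
def HasFrobGradientAt {m n : ℕ} (f : Matrix (Fin m) (Fin n) ℝ → ℝ)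
    (G X : Matrix (Fin m) (Fin n) ℝ) : Prop :=
  Filter.Tendsto
    (fun H : Matrix (Fin m) (Fin n) ℝ => |f (X + H) - f X - finner G H| / frobNorm H)
    (nhdsWithin 0 {0}ᶜ) (nhds 0)

/-!
Subtracting the stationarity equation of the subproblem from `E^{k+1}` leaves
`(∇f(X^{k+1}) - ∇f(Y^k)) - β (X^{k+1} - Y^k) - β (X^{k+1} - X^k) + λ U diag((w̄ - w) ∘ ξ) Vᵀ`.
The first three terms vanish with the gaps `‖X^{k+1} - X^k‖_F`, since `f` has a Lipschitz
gradient and the extrapolation `Y^k - X^k` is a bounded multiple of the previous gap. As `U`, `V`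
are orthogonal and `|ξ_i| ≤ 1`, the last term is at most `λ ∑ |w̄_i - w_i|`. Here `w̄_i = w_i` for
`i > r`, while for `i ≤ r` both `σ_i(X^{k+1})` and `σ_i(X^k) + ε_i^k` stay above `c`, where
`t ↦ t^{p-1}` is Hölder continuous, and they differ by at most `‖X^{k+1} - X^k‖_F + ε_i^k → 0`
by Weyl's inequality `|σ_i(A) - σ_i(B)| ≤ ‖A - B‖_F`.
-/

attribute [local instance] Matrix.frobeniusNormedAddCommGroup Matrix.frobeniusNormedSpace

lemma norm_toLp_le_sum_abs {ι : Type*} [Fintype ι] (d : ι → ℝ) :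
    ‖WithLp.toLp 2 d‖ ≤ ∑ i, |d i| := by
  classical
  calc ‖WithLp.toLp 2 d‖ = ‖∑ i, EuclideanSpace.single i (d i)‖ := by
        rw [← WithLp.toLp_sum]
        simp [Finset.univ_sum_single]
    _ ≤ ∑ i, ‖EuclideanSpace.single i (d i)‖ := norm_sum_le _ _
    _ = ∑ i, |d i| := by simp

section Frobenius

variable {m n : ℕ}

lemma frobNorm_eq_norm (A : Matrix (Fin m) (Fin n) ℝ) : frobNorm A = ‖A‖ := by
  simp [frobNorm, frobenius_norm_def, Real.sqrt_eq_rpow]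

lemma frobenius_norm_sq_eq_trace (A : Matrix (Fin m) (Fin n) ℝ) : ‖A‖ ^ 2 = trace (Aᵀ * A) := by
  rw [← frobNorm_eq_norm, frobNorm, Real.sq_sqrt (by positivity), trace, Finset.sum_comm]
  simp [Matrix.mul_apply, sq]

lemma frobenius_norm_mul_mul_transpose {U : Matrix (Fin m) (Fin m) ℝ} {V : Matrix (Fin n) (Fin n) ℝ}
    (hU : Uᵀ * U = 1) (hV : Vᵀ * V = 1) (M : Matrix (Fin m) (Fin n) ℝ) :
    ‖U * M * Vᵀ‖ = ‖M‖ := by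
  have key : (U * M * Vᵀ)ᵀ * (U * M * Vᵀ) = V * (Mᵀ * (Uᵀ * U) * M) * Vᵀ := by
    simp only [transpose_mul, transpose_transpose, Matrix.mul_assoc]
  rw [← sq_eq_sq₀ (norm_nonneg _) (norm_nonneg _), frobenius_norm_sq_eq_trace,
    frobenius_norm_sq_eq_trace, key, hU, Matrix.mul_one, trace_mul_cycle, ← Matrix.mul_assoc,
    hV, Matrix.one_mul]

lemma frobenius_norm_rdiag (hmn : m ≤ n) (d : Fin m → ℝ) :
    ‖(rdiag d : Matrix (Fin m) (Fin n) ℝ)‖ = ‖WithLp.toLp 2 d‖ := by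
  rw [← frobNorm_eq_norm, frobNorm, EuclideanSpace.norm_eq]
  congr 1
  refine Finset.sum_congr rfl fun i _ => ?_
  rw [Finset.sum_eq_single (Fin.castLE hmn i)]
  · simp [rdiag]
  · intro j _ hj
    have : (j : ℕ) ≠ i := fun h => hj (Fin.ext h)
    simp [rdiag, this]
  · simp

lemma rdiag_add (d e : Fin m → ℝ) :
    (rdiag (d + e) : Matrix (Fin m) (Fin n) ℝ) = rdiag d + rdiag e := by
  ext i j
  simp only [rdiag, of_apply, Matrix.add_apply, Pi.add_apply]
  split_ifs <;> simp

lemma norm_mul_rdiag_mul_transpose_le (hmn : m ≤ n) {U : Matrix (Fin m) (Fin m) ℝ}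
    {V : Matrix (Fin n) (Fin n) ℝ} (hU : Uᵀ * U = 1) (hV : Vᵀ * V = 1) (d : Fin m → ℝ) :
    ‖U * rdiag (n := n) d * Vᵀ‖ ≤ ∑ i, |d i| := by
  rw [frobenius_norm_mul_mul_transpose hU hV, frobenius_norm_rdiag hmn]
  exact norm_toLp_le_sum_abs d

end Frobenius

lemma abs_rpow_sub_rpow_le {a b q : ℝ} (ha : 0 ≤ a) (hb : 0 ≤ b) (hq0 : 0 ≤ q) (hq1 : q ≤ 1) :
    |a ^ q - b ^ q| ≤ |a - b| ^ q := by
  wlog hba : b ≤ a generalizing a b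
  · rw [abs_sub_comm, abs_sub_comm a b]
    exact this hb ha (le_of_not_ge hba)
  have h := Real.rpow_add_le_add_rpow (sub_nonneg.2 hba) hb hq0 hq1
  rw [sub_add_cancel] at h
  rw [abs_of_nonneg (sub_nonneg.2 (Real.rpow_le_rpow hb hba hq0)),
    abs_of_nonneg (sub_nonneg.2 hba)]
  linarith

lemma abs_rpow_neg_sub_rpow_neg_le {a b c q : ℝ} (hc : 0 < c) (ha : c ≤ a) (hb : c ≤ b)
    (hq0 : 0 ≤ q) (hq1 : q ≤ 1) :
    |a ^ (-q) - b ^ (-q)| ≤ |a - b| ^ q / (c ^ q) ^ 2 := by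
  have ha0 : 0 < a := hc.trans_le ha
  have hb0 : 0 < b := hc.trans_le hb
  have hab : a ^ (-q) - b ^ (-q) = (b ^ q - a ^ q) / (a ^ q * b ^ q) := by
    rw [Real.rpow_neg ha0.le, Real.rpow_neg hb0.le]
    field_simp
  have hc2 : (c ^ q) ^ 2 ≤ a ^ q * b ^ q := by
    rw [sq]
    exact mul_le_mul (Real.rpow_le_rpow hc.le ha hq0) (Real.rpow_le_rpow hc.le hb hq0)
      (by positivity) (by positivity)
  rw [hab, abs_div, abs_sub_comm, abs_of_pos (show 0 < a ^ q * b ^ q by positivity)]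
  calc |a ^ q - b ^ q| / (a ^ q * b ^ q) ≤ |a - b| ^ q / (a ^ q * b ^ q) := by
        gcongr
        exact abs_rpow_sub_rpow_le ha0.le hb0.le hq0 hq1
    _ ≤ |a - b| ^ q / (c ^ q) ^ 2 := by gcongr

lemma tendsto_rpow_neg_sub_rpow_neg {ι : Type*} {l : Filter ι} {a b : ι → ℝ} {c q : ℝ}
    (hc : 0 < c) (hq0 : 0 < q) (hq1 : q ≤ 1) (ha : ∀ᶠ k in l, c ≤ a k) (hb : ∀ᶠ k in l, c ≤ b k)
    (hab : Tendsto (fun k => a k - b k) l (𝓝 0)) :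
    Tendsto (fun k => a k ^ (-q) - b k ^ (-q)) l (𝓝 0) := by
  have hbound : Tendsto (fun k => |a k - b k| ^ q / (c ^ q) ^ 2) l (𝓝 0) := by
    have habs : Tendsto (fun k => |a k - b k|) l (𝓝 0) := by simpa using hab.abs
    have := ((Real.continuousAt_rpow_const 0 q (Or.inr hq0.le)).tendsto.comp habs).div_const
      ((c ^ q) ^ 2)
    simpa [Real.zero_rpow hq0.ne'] using this
  refine squeeze_zero_norm' ?_ hbound
  filter_upwards [ha, hb] with k hak hbk
  exact abs_rpow_neg_sub_rpow_neg_le hc hak hbk hq0.le hq1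

section InnerProductSpace

variable {ι E : Type*} [Fintype ι] [NormedAddCommGroup E] [InnerProductSpace ℝ E]

lemma OrthonormalBasis.repr_eq_zero_of_mem_span (b : OrthonormalBasis ι ℝ E) {s : Set ι} {x : E}
    (hx : x ∈ Submodule.span ℝ (b '' s)) {i : ι} (hi : i ∉ s) : b.repr x i = 0 := by
  rw [b.repr_apply_apply]
  induction hx using Submodule.span_induction with
  | mem y hy =>
    obtain ⟨u, hu, rfl⟩ := hy
    exact b.orthonormal.2 fun h => hi (h ▸ hu)
  | zero => simp
  | add y z _ _ hy hz => rw [inner_add_right, hy, hz, add_zero]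
  | smul a y _ hy => rw [inner_smul_right, hy, mul_zero]

lemma OrthonormalBasis.sum_repr_sq (b : OrthonormalBasis ι ℝ E) (x : E) :
    ∑ u, (b.repr x u) ^ 2 = ‖x‖ ^ 2 := by
  rw [← b.repr.norm_map x, EuclideanSpace.norm_sq_eq]
  simp

lemma OrthonormalBasis.sum_mul_repr_sq_le_of_mem_span (b : OrthonormalBasis ι ℝ E)
    {t : Finset ι} {x : E} (hx : x ∈ Submodule.span ℝ (b '' t)) {f g : ι → ℝ}
    (hfg : ∀ u ∈ t, f u ≤ g u) :
    ∑ u, f u * (b.repr x u) ^ 2 ≤ ∑ u, g u * (b.repr x u) ^ 2 := by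
  refine Finset.sum_le_sum fun u _ => ?_
  by_cases hu : u ∈ t
  · exact mul_le_mul_of_nonneg_right (hfg u hu) (sq_nonneg _)
  · simp [b.repr_eq_zero_of_mem_span hx (Finset.mem_coe.not.2 hu)]

lemma exists_mem_mem_norm_eq_one_of_lt_finrank_add [FiniteDimensional ℝ E]
    {S T : Submodule ℝ E} (h : Module.finrank ℝ E < Module.finrank ℝ S + Module.finrank ℝ T) :
    ∃ x ∈ S, x ∈ T ∧ ‖x‖ = 1 := by
  obtain ⟨x, hxS, hxT, hx0⟩ : ∃ x ∈ S, x ∈ T ∧ x ≠ 0 := by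
    by_contra! hST
    exact h.not_ge (Submodule.finrank_add_finrank_le_of_disjoint
      (Submodule.disjoint_def.2 hST))
  exact ⟨‖x‖⁻¹ • x, S.smul_mem _ hxS, T.smul_mem _ hxT, norm_smul_inv_norm hx0⟩

lemma OrthonormalBasis.finrank_span_image (b : OrthonormalBasis ι ℝ E) (t : Finset ι) :
    Module.finrank ℝ (Submodule.span ℝ (b '' t)) = t.card := by
  have hli : LinearIndependent ℝ fun u : t => b u :=
    b.orthonormal.linearIndependent.comp _ Subtype.val_injective
  have hrange : Set.range (fun u : t => b u) = b '' t := by ext; simp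
  rw [← hrange, finrank_span_eq_card hli, Fintype.card_coe]

end InnerProductSpace

lemma Matrix.IsHermitian.inner_toEuclideanLin_self {ι : Type*} [Fintype ι] [DecidableEq ι]
    {H : Matrix ι ι ℝ} (hH : H.IsHermitian) (x : EuclideanSpace ℝ ι) :
    inner ℝ x (toEuclideanLin H x) =
      ∑ u, hH.eigenvalues u * (hH.eigenvectorBasis.repr x u) ^ 2 := by
  set b := hH.eigenvectorBasis
  have hrepr : ∀ u, b.repr (toEuclideanLin H x) u = hH.eigenvalues u * b.repr x u := by
    intro u
    have hb : toEuclideanLin H (b u) = hH.eigenvalues u • b u :=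
      congrArg (WithLp.toLp 2) (hH.mulVec_eigenvectorBasis u)
    rw [b.repr_apply_apply, b.repr_apply_apply,
      ← (isSymmetric_toEuclideanLin_iff.2 hH) (b u) x, hb, real_inner_smul_left]
  rw [← b.repr.inner_map_map, PiLp.inner_apply]
  refine Finset.sum_congr rfl fun u _ => ?_
  rw [hrepr u]
  simp only [RCLike.inner_apply, conj_trivial]
  ring

section SingularValues

variable {m n : ℕ}

lemma norm_toEuclideanLin_le (M : Matrix (Fin m) (Fin n) ℝ) (x : EuclideanSpace ℝ (Fin n)) :
    ‖toEuclideanLin M x‖ ≤ ‖M‖ * ‖x‖ := by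
  rw [toLpLin_apply, ← frobenius_norm_replicateCol (ι := Unit), replicateCol_mulVec,
    ← frobenius_norm_replicateCol (ι := Unit) x.ofLp]
  exact frobenius_norm_mul _ _

lemma norm_toEuclideanLin_conjTranspose_sq (A : Matrix (Fin m) (Fin n) ℝ)
    (x : EuclideanSpace ℝ (Fin m)) :
    ‖toEuclideanLin Aᴴ x‖ ^ 2 =
      ∑ u, (isHermitian_mul_conjTranspose_self A).eigenvalues u *
        ((isHermitian_mul_conjTranspose_self A).eigenvectorBasis.repr x u) ^ 2 := by
  rw [← Matrix.IsHermitian.inner_toEuclideanLin_self, ← real_inner_self_eq_norm_sq,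
    toEuclideanLin_conjTranspose_eq_adjoint, LinearMap.adjoint_inner_left,
    ← toEuclideanLin_conjTranspose_eq_adjoint]
  simp [toLpLin_apply, mulVec_mulVec]

lemma mul_norm_sq_le_norm_toEuclideanLin_conjTranspose_sq (A : Matrix (Fin m) (Fin n) ℝ)
    {t : Finset (Fin m)} {θ : ℝ}
    (hθ : ∀ u ∈ t, θ ≤ (isHermitian_mul_conjTranspose_self A).eigenvalues u)
    {x : EuclideanSpace ℝ (Fin m)}
    (hx : x ∈ Submodule.span ℝ ((isHermitian_mul_conjTranspose_self A).eigenvectorBasis '' t)) :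
    θ * ‖x‖ ^ 2 ≤ ‖toEuclideanLin Aᴴ x‖ ^ 2 := by
  rw [norm_toEuclideanLin_conjTranspose_sq,
    ← (isHermitian_mul_conjTranspose_self A).eigenvectorBasis.sum_repr_sq x, Finset.mul_sum]
  exact OrthonormalBasis.sum_mul_repr_sq_le_of_mem_span _ hx (f := fun _ => θ) hθ

lemma norm_toEuclideanLin_conjTranspose_sq_le_mul_norm_sq (A : Matrix (Fin m) (Fin n) ℝ)
    {t : Finset (Fin m)} {θ : ℝ}
    (hθ : ∀ u ∈ t, (isHermitian_mul_conjTranspose_self A).eigenvalues u ≤ θ)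
    {x : EuclideanSpace ℝ (Fin m)}
    (hx : x ∈ Submodule.span ℝ ((isHermitian_mul_conjTranspose_self A).eigenvectorBasis '' t)) :
    ‖toEuclideanLin Aᴴ x‖ ^ 2 ≤ θ * ‖x‖ ^ 2 := by
  rw [norm_toEuclideanLin_conjTranspose_sq,
    ← (isHermitian_mul_conjTranspose_self A).eigenvectorBasis.sum_repr_sq x, Finset.mul_sum]
  exact OrthonormalBasis.sum_mul_repr_sq_le_of_mem_span _ hx (g := fun _ => θ) hθ

lemma sval_le_sval_add_norm_sub (A B : Matrix (Fin m) (Fin n) ℝ) (i : Fin m) :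
    sval A i ≤ sval B i + ‖A - B‖ := by
  set hA := isHermitian_mul_conjTranspose_self A
  set hB := isHermitian_mul_conjTranspose_self B
  set σA := Tuple.sort hA.eigenvalues
  set σB := Tuple.sort hB.eigenvalues
  set tA := (Finset.Ici i.rev).image σA
  set tB := (Finset.Iic i.rev).image σB
  -- `tA` indexes the `m - i.rev` largest eigenvalues of `A Aᴴ` and `tB` the `i.rev + 1` smallest
  -- of `B Bᴴ`, so the spans of the corresponding eigenvectors meet (Courant–Fischer).
  have hcard : m < tA.card + tB.card := by
    rw [Finset.card_image_of_injective _ σA.injective,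
      Finset.card_image_of_injective _ σB.injective, Fin.card_Ici, Fin.card_Iic]
    omega
  obtain ⟨x, hxA, hxB, hx⟩ := exists_mem_mem_norm_eq_one_of_lt_finrank_add
    (S := Submodule.span ℝ (hA.eigenvectorBasis '' tA))
    (T := Submodule.span ℝ (hB.eigenvectorBasis '' tB))
    (by rwa [finrank_euclideanSpace_fin, OrthonormalBasis.finrank_span_image,
      OrthonormalBasis.finrank_span_image])
  have hA_ge : ∀ u ∈ tA, hA.eigenvalues (σA i.rev) ≤ hA.eigenvalues u := by
    simp only [tA, Finset.mem_image, Finset.mem_Ici]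
    rintro _ ⟨j, hj, rfl⟩
    exact Tuple.monotone_sort hA.eigenvalues hj
  have hB_le : ∀ u ∈ tB, hB.eigenvalues u ≤ hB.eigenvalues (σB i.rev) := by
    simp only [tB, Finset.mem_image, Finset.mem_Iic]
    rintro _ ⟨j, hj, rfl⟩
    exact Tuple.monotone_sort hB.eigenvalues hj
  have hAx : sval A i ≤ ‖toEuclideanLin Aᴴ x‖ := by
    refine Real.sqrt_le_iff.2 ⟨norm_nonneg _, ?_⟩
    simpa [hx] using mul_norm_sq_le_norm_toEuclideanLin_conjTranspose_sq A hA_ge hxA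
  have hBx : ‖toEuclideanLin Bᴴ x‖ ≤ sval B i := by
    refine Real.le_sqrt_of_sq_le ?_
    simpa [hx] using norm_toEuclideanLin_conjTranspose_sq_le_mul_norm_sq B hB_le hxB
  calc sval A i ≤ ‖toEuclideanLin Aᴴ x‖ := hAx
    _ = ‖toEuclideanLin Bᴴ x + toEuclideanLin (A - B)ᴴ x‖ := by
        rw [conjTranspose_sub, map_sub, LinearMap.sub_apply, add_sub_cancel]
    _ ≤ sval B i + ‖A - B‖ * ‖x‖ := by
        refine (norm_add_le _ _).trans (add_le_add hBx ?_)
        rw [← frobenius_norm_conjTranspose (A - B)]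
        exact norm_toEuclideanLin_le _ x
    _ = sval B i + ‖A - B‖ := by rw [hx, mul_one]

lemma abs_sval_sub_sval_le (A B : Matrix (Fin m) (Fin n) ℝ) (i : Fin m) :
    |sval A i - sval B i| ≤ ‖A - B‖ := by
  have h := sval_le_sval_add_norm_sub B A i
  rw [← norm_neg, neg_sub] at h
  rw [abs_sub_le_iff]
  constructor <;> linarith [sval_le_sval_add_norm_sub A B i]

end SingularValues

lemma tendsto_norm_sub_extrapolation {E : Type*} [SeminormedAddCommGroup E] [NormedSpace ℝ E]
    {X Y : ℕ → E} {α : ℕ → ℝ} {ᾱ : ℝ} (hα : ∀ k, |α k| ≤ ᾱ)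
    (hY : ∀ k, Y k = X k + α k • (X k - X (k - 1)))
    (hX : Tendsto (fun k => ‖X (k + 1) - X k‖) atTop (𝓝 0)) :
    Tendsto (fun k => ‖X (k + 1) - Y k‖) atTop (𝓝 0) := by
  have hX' : Tendsto (fun k => ‖X k - X (k - 1)‖) atTop (𝓝 0) := by
    refine (hX.comp (tendsto_sub_atTop_nat 1)).congr' ?_
    filter_upwards [eventually_ge_atTop 1] with k hk
    simp [Nat.sub_add_cancel hk]
  have hbound := hX.add (hX'.const_mul ᾱ)
  rw [mul_zero, add_zero] at hbound
  refine squeeze_zero (fun _ => norm_nonneg _) (fun k => ?_) hbound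
  calc ‖X (k + 1) - Y k‖ = ‖(X (k + 1) - X k) - α k • (X k - X (k - 1))‖ := by
        rw [hY k, sub_sub]
    _ ≤ ‖X (k + 1) - X k‖ + |α k| * ‖X k - X (k - 1)‖ := by
        rw [← Real.norm_eq_abs, ← norm_smul]
        exact norm_sub_le _ _
    _ ≤ ‖X (k + 1) - X k‖ + ᾱ * ‖X k - X (k - 1)‖ := by gcongr; exact hα k

lemma norm_optimality_error_le {m n : ℕ} (hmn : m ≤ n) {U : Matrix (Fin m) (Fin m) ℝ}
    {V : Matrix (Fin n) (Fin n) ℝ} (hU : Uᵀ * U = 1) (hV : Vᵀ * V = 1)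
    {G₀ G₁ X₀ X₁ Y : Matrix (Fin m) (Fin n) ℝ} {β lam : ℝ} {a b ξ : Fin m → ℝ}
    (hξ : ∀ i, |ξ i| ≤ 1)
    (hstat : 0 = G₀ + β • (X₁ - Y) + β • (X₁ - X₀)
      + lam • (U * rdiag (n := n) (fun i => b i * ξ i) * Vᵀ)) :
    ‖G₁ + lam • (U * rdiag (n := n) (fun i => a i * ξ i) * Vᵀ)‖ ≤
      ‖G₁ - G₀‖ + |β| * ‖X₁ - Y‖ + |β| * ‖X₁ - X₀‖ + |lam| * ∑ i, |a i - b i| := by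
  set D := U * rdiag (n := n) (fun i => (a i - b i) * ξ i) * Vᵀ
  have hsplit : (fun i => a i * ξ i) = (fun i => b i * ξ i) + fun i => (a i - b i) * ξ i := by
    funext i; simp only [Pi.add_apply]; ring
  have hE : G₁ + lam • (U * rdiag (n := n) (fun i => a i * ξ i) * Vᵀ) =
      (G₁ - G₀) + (-β) • (X₁ - Y) + (-β) • (X₁ - X₀) + lam • D := by
    rw [hsplit, rdiag_add, Matrix.mul_add, Matrix.add_mul, smul_add,
      eq_neg_of_add_eq_zero_right hstat.symm]
    module
  have hD : ‖D‖ ≤ ∑ i, |a i - b i| := by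
    refine (norm_mul_rdiag_mul_transpose_le hmn hU hV _).trans (Finset.sum_le_sum fun i _ => ?_)
    rw [abs_mul]
    exact mul_le_of_le_one_right (abs_nonneg _) (hξ i)
  rw [hE]
  refine norm_add₄_le.trans ?_
  simp only [norm_smul, Real.norm_eq_abs, abs_neg]
  gcongr

lemma tendsto_sval_rpow_neg_sub {m n : ℕ} {X : ℕ → Matrix (Fin m) (Fin n) ℝ} {ε : ℕ → ℝ}
    {c q : ℝ} (hc : 0 < c) (hq0 : 0 < q) (hq1 : q ≤ 1) (i : Fin m)
    (hlow : ∀ᶠ k in atTop, c ≤ sval (X (k + 1)) i ∧ c ≤ sval (X k) i + ε k)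
    (hε : Tendsto ε atTop (𝓝 0)) (hX : Tendsto (fun k => ‖X (k + 1) - X k‖) atTop (𝓝 0)) :
    Tendsto (fun k => sval (X (k + 1)) i ^ (-q) - (sval (X k) i + ε k) ^ (-q)) atTop (𝓝 0) := by
  refine tendsto_rpow_neg_sub_rpow_neg hc hq0 hq1 (hlow.mono fun _ h => h.1)
    (hlow.mono fun _ h => h.2) ?_
  have hsval : Tendsto (fun k => sval (X (k + 1)) i - sval (X k) i) atTop (𝓝 0) :=
    squeeze_zero_norm (fun k => abs_sval_sub_sval_le _ _ i) hX
  simpa [sub_add_eq_sub_sub] using hsval.sub hε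

theorem stmt_11_general {m n : ℕ} (hmn : m ≤ n) (p lam β Lf alphabar : ℝ)
    (hp0 : 0 < p) (hp1 : p < 1)
    (Gf : Matrix (Fin m) (Fin n) ℝ → Matrix (Fin m) (Fin n) ℝ)
    (hlip : ∀ Z W, frobNorm (Gf Z - Gf W) ≤ Lf * frobNorm (Z - W))
    (X Y : ℕ → Matrix (Fin m) (Fin n) ℝ) (ε : ℕ → Fin m → ℝ)
    (α : ℕ → ℝ) (hα : ∀ k, α k ∈ Set.Icc 0 alphabar)
    (hY : ∀ k, Y k = X k + α k • (X k - X (k - 1)))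
    (w : ℕ → Fin m → ℝ)
    (hw : ∀ k i, w k i = p * (sval (X k) i + ε k i) ^ (p - 1))
    (U : ℕ → Matrix (Fin m) (Fin m) ℝ) (V : ℕ → Matrix (Fin n) (Fin n) ℝ)
    (ξ : ℕ → Fin m → ℝ)
    (r : ℕ) (c : ℝ) (hc : 0 < c) (K : ℕ)
    (hbig : ∀ k, K ≤ k →
      (U (k + 1))ᵀ * U (k + 1) = 1 ∧
      (V (k + 1))ᵀ * V (k + 1) = 1 ∧
      X (k + 1) = U (k + 1) * rdiag (sval (X (k + 1))) * (V (k + 1))ᵀ ∧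
      (∀ i : Fin m, |ξ (k + 1) i| ≤ 1) ∧
      (0 : Matrix (Fin m) (Fin n) ℝ) =
        Gf (Y k) + β • (X (k + 1) - Y k) + β • (X (k + 1) - X k)
          + lam • (U (k + 1) * rdiag (fun i => w k i * ξ (k + 1) i) * (V (k + 1))ᵀ) ∧
      (∀ i : Fin m, (i : ℕ) < r → c ≤ sval (X (k + 1)) i ∧ c ≤ sval (X k) i + ε k i) ∧
      (∀ i : Fin m, r ≤ (i : ℕ) → sval (X (k + 1)) i = 0))
    (hεlim : ∀ i : Fin m, (i : ℕ) < r →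
      Filter.Tendsto (fun k => ε k i) Filter.atTop (nhds 0))
    (hXlim : Filter.Tendsto (fun k : ℕ => frobNorm (X (k + 1) - X k))
      Filter.atTop (nhds 0)) :
    Filter.Tendsto
      (fun k : ℕ => frobNorm (Gf (X (k + 1))
        + lam • (U (k + 1) * rdiag (fun i : Fin m =>
            (if (i : ℕ) < r then p * sval (X (k + 1)) i ^ (p - 1) else w k i)
              * ξ (k + 1) i) * (V (k + 1))ᵀ)))
      Filter.atTop (nhds 0) := by
  simp only [frobNorm_eq_norm] at hlip hXlim ⊢
  have hXY := tendsto_norm_sub_extrapolation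
    (fun k => (abs_of_nonneg (hα k).1).trans_le (hα k).2) hY hXlim
  have hweight : ∀ i : Fin m, Tendsto (fun k =>
      |(if (i : ℕ) < r then p * sval (X (k + 1)) i ^ (p - 1) else w k i) - w k i|)
      atTop (𝓝 0) := by
    intro i
    by_cases hi : (i : ℕ) < r
    · have hlow := (eventually_ge_atTop K).mono fun k hk => (hbig k hk).2.2.2.2.2.1 i hi
      have h := tendsto_sval_rpow_neg_sub hc (q := 1 - p) (by linarith) (by linarith) i hlow
        (hεlim i hi) hXlim
      simpa [hi, hw, ← mul_sub] using (h.const_mul p).abs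
    · simp [hi]
  have hbound := (((hXY.const_mul Lf).add (hXY.const_mul |β|)).add (hXlim.const_mul |β|)).add
    ((tendsto_finsetSum Finset.univ fun i _ => hweight i).const_mul |lam|)
  simp only [mul_zero, add_zero, Finset.sum_const_zero] at hbound
  refine squeeze_zero' (.of_forall fun _ => norm_nonneg _) ?_ hbound
  filter_upwards [eventually_ge_atTop K] with k hk
  obtain ⟨hU, hV, -, hξ, hstat, -, -⟩ := hbig k hk
  refine (norm_optimality_error_le hmn hU hV hξ hstat).trans ?_
  gcongr
  exact hlip _ _

/-- Vanishing optimality error: under the stationarity equations of the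
subproblems, rank stabilization with singular values bounded below by `c > 0`, vanishing
perturbations `ε_i^k → 0` (for `i ≤ r`) and vanishing gaps `‖X^{k+1} − X^k‖_F → 0`,
the optimality error `E^{k+1} = ∇f(X^{k+1}) + λ U^{k+1} diag(w̄^{k+1} ∘ ξ^{k+1}) (V^{k+1})ᵀ`
satisfies `‖E^{k+1}‖_F → 0`. -/
theorem stmt_11 {m n : ℕ} (hmn : m ≤ n) (p lam β Lf alphabar : ℝ)
    (hp0 : 0 < p) (hp1 : p < 1) (hlam : 0 < lam) (hβ : 0 < β) (hab : 0 ≤ alphabar)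
    (f : Matrix (Fin m) (Fin n) ℝ → ℝ)
    (Gf : Matrix (Fin m) (Fin n) ℝ → Matrix (Fin m) (Fin n) ℝ)
    (hgrad : ∀ Z, HasFrobGradientAt f (Gf Z) Z)
    (hlip : ∀ Z W, frobNorm (Gf Z - Gf W) ≤ Lf * frobNorm (Z - W))
    (X Y : ℕ → Matrix (Fin m) (Fin n) ℝ) (ε : ℕ → Fin m → ℝ)
    (hε : ∀ k i, 0 < ε k i)
    (α : ℕ → ℝ) (hα : ∀ k, α k ∈ Set.Icc 0 alphabar)
    (hY : ∀ k, Y k = X k + α k • (X k - X (k - 1)))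
    (w : ℕ → Fin m → ℝ)
    (hw : ∀ k i, w k i = p * (sval (X k) i + ε k i) ^ (p - 1))
    (U : ℕ → Matrix (Fin m) (Fin m) ℝ) (V : ℕ → Matrix (Fin n) (Fin n) ℝ)
    (ξ : ℕ → Fin m → ℝ)
    (r : ℕ) (c : ℝ) (hc : 0 < c) (K : ℕ)
    (hbig : ∀ k, K ≤ k →
      (U (k + 1))ᵀ * U (k + 1) = 1 ∧
      (V (k + 1))ᵀ * V (k + 1) = 1 ∧
      X (k + 1) = U (k + 1) * rdiag (sval (X (k + 1))) * (V (k + 1))ᵀ ∧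
      (∀ i : Fin m, |ξ (k + 1) i| ≤ 1) ∧
      (0 : Matrix (Fin m) (Fin n) ℝ) =
        Gf (Y k) + β • (X (k + 1) - Y k) + β • (X (k + 1) - X k)
          + lam • (U (k + 1) * rdiag (fun i => w k i * ξ (k + 1) i) * (V (k + 1))ᵀ) ∧
      (∀ i : Fin m, (i : ℕ) < r → c ≤ sval (X (k + 1)) i ∧ c ≤ sval (X k) i + ε k i) ∧
      (∀ i : Fin m, r ≤ (i : ℕ) → sval (X (k + 1)) i = 0))
    (hεlim : ∀ i : Fin m, (i : ℕ) < r →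
      Filter.Tendsto (fun k => ε k i) Filter.atTop (nhds 0))
    (hXlim : Filter.Tendsto (fun k : ℕ => frobNorm (X (k + 1) - X k))
      Filter.atTop (nhds 0)) :
    Filter.Tendsto
      (fun k : ℕ => frobNorm (Gf (X (k + 1))
        + lam • (U (k + 1) * rdiag (fun i : Fin m =>
            (if (i : ℕ) < r then p * sval (X (k + 1)) i ^ (p - 1) else w k i)
              * ξ (k + 1) i) * (V (k + 1))ᵀ)))
      Filter.atTop (nhds 0) :=
  stmt_11_general hmn p lam β Lf alphabar hp0 hp1 Gf hlip X Y ε α hα hY w hw U V ξ r c hc K hbig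
    hεlim hXlim
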